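/- For real numbers h > 0, N > 0, ρ ≥ 0, and α > 1, it holds that α · log(1 + h/(α·ρ + N)) > log(1 + h/(ρ + N)). -/

import Mathlib

/-!
Write `x = h / (αρ + N)`. Since `αρ + N < α(ρ + N)`, the rate `h / (ρ + N)` is at most `αx`, and
Bernoulli's strict inequality `1 + αx < (1 + x)^α` gives `log (1 + αx) < α log (1 + x)`.
-/

open Real

theorem log_one_add_mul_lt_mul_log_one_add {x α : ℝ} (hx : 0 < x) (hα : 1 < α) :
    log (1 + α * x) < α * log (1 + x) := by
  have bernoulli : 1 + α * x < (1 + x) ^ α :=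
    one_add_mul_self_lt_rpow_one_add (by linarith) hx.ne' hα
  calc log (1 + α * x) < log ((1 + x) ^ α) := log_lt_log (by positivity) bernoulli
    _ = α * log (1 + x) := log_rpow (by linarith) α

theorem div_add_le_mul_div_mul_add {h N ρ α : ℝ} (hh : 0 ≤ h) (hN : 0 ≤ N) (hρ : 0 ≤ ρ)
    (hα : 1 ≤ α) (hρN : 0 < ρ + N) :
    h / (ρ + N) ≤ α * (h / (α * ρ + N)) := by
  have hαρN : 0 < α * ρ + N := by nlinarith
  rw [mul_div_assoc', div_le_div_iff₀ hρN hαρN]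
  nlinarith [mul_nonneg (mul_nonneg hh hN) (sub_nonneg.2 hα)]

theorem stmt_2 (h N ρ α : ℝ) (hh : 0 < h) (hN : 0 < N) (hρ : 0 ≤ ρ) (hα : 1 < α) :
    α * Real.log (1 + h / (α * ρ + N)) > Real.log (1 + h / (ρ + N)) := by
  have hx : 0 < h / (α * ρ + N) := div_pos hh (by positivity)
  calc log (1 + h / (ρ + N)) ≤ log (1 + α * (h / (α * ρ + N))) := by
        gcongr
        exact div_add_le_mul_div_mul_add hh.le hN.le hρ hα.le (by positivity)
    _ < α * log (1 + h / (α * ρ + N)) := log_one_add_mul_lt_mul_log_one_add hx hα
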